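/- For every fixed angle φ ∈ [−π, π), the adversarial distance between antipodal-phase high-power points vanishes: lim_{|x|→∞} d(x, xe^{iφ}) = 0. Equivalently, for every ε > 0 there exists ρ such that d(x, xe^{iφ}) < ε whenever |x| > ρ. -/

import Mathlib

/-- Energy (effort) of a control on `[0, L]`. -/
noncomputable def energy (L : ℝ) (n : ℝ → ℂ) : ℝ := ∫ z in (0:ℝ)..L, ‖n z‖^2

/-- The per-sample channel ODE: `q' = iγ|q|²q + n` on `[0, L]`. -/
def IsSol (γ L : ℝ) (n q : ℝ → ℂ) : Prop :=
  ∀ z ∈ Set.Icc (0:ℝ) L,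
    HasDerivAt q (Complex.I * (γ:ℂ) * ((‖q z‖:ℂ))^2 * q z + n z) z

/-- The noise ball `B_E(x)`: outputs reachable from input `x` with effort at most `E`. -/
def noiseBall (γ L : ℝ) (x : ℂ) (E : ℝ) : Set ℂ :=
  {y | ∃ n q : ℝ → ℂ, ContinuousOn n (Set.Icc 0 L) ∧ IsSol γ L n q ∧
    q 0 = x ∧ q L = y ∧ energy L n ≤ E}

/-- The adversarial distance between two input points. -/
noncomputable def adist (γ L : ℝ) (x₁ x₂ : ℂ) : ℝ :=
  sInf {E | 0 ≤ E ∧ (noiseBall γ L x₁ E ∩ noiseBall γ L x₂ E).Nonempty}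

/-!
At power `|q|² = a²` the channel rotates the phase at rate `γ a²`, so a phase shift is cheapest
to buy through the power rather than by pushing the phase directly. Running the trajectory
`q = (x/a) r e^{iθ}` with `r² = a² + δ z (L - z)` and `θ' = γ r²` back to power `a²` at `z = L`
gains the extra phase `γ δ L³ / 6`, and the control only has to supply the amplitude change
`r' e^{iθ}`, where `r' = δ (L - 2z) / (2r)` has energy at most `δ² L³ / (2 a²)`. With
`δ = 6φ / (γ L³)` this trajectory from `x` ends where the uncontrolled one from `x e^{iφ}` does,
so `d(x, x e^{iφ}) = O(1 / |x|²)`.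
-/

open Complex Set

theorem norm_mul_ofReal_mul_exp_I (c : ℂ) (r θ : ℝ) : ‖c * (r : ℂ) * exp (I * θ)‖ = ‖c‖ * |r| := by
  rw [norm_mul, norm_mul, norm_real, Real.norm_eq_abs, norm_exp_I_mul_ofReal, mul_one]

theorem isSol_polar {γ L : ℝ} (c : ℂ) {r r' θ : ℝ → ℝ}
    (hr : ∀ z ∈ Icc 0 L, HasDerivAt r (r' z) z)
    (hθ : ∀ z ∈ Icc 0 L, HasDerivAt θ (γ * ‖c‖ ^ 2 * r z ^ 2) z) :
    IsSol γ L (fun z => c * r' z * exp (I * θ z)) (fun z => c * r z * exp (I * θ z)) := by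
  intro z hz
  refine (((hr z hz).ofReal_comp.const_mul c).mul
    (((hθ z hz).ofReal_comp.const_mul I).cexp)).congr_deriv ?_
  have habs : ((|r z| : ℝ) : ℂ) ^ 2 = (r z : ℂ) ^ 2 := by exact_mod_cast sq_abs (r z)
  simp only [norm_mul_ofReal_mul_exp_I]
  rw [ofReal_mul ‖c‖, mul_pow, habs]
  push_cast
  ring

theorem energy_le_of_sq_norm_le {L B : ℝ} (hL : 0 ≤ L) {n : ℝ → ℂ}
    (hn : ContinuousOn n (Icc 0 L)) (hB : ∀ z ∈ Icc 0 L, ‖n z‖ ^ 2 ≤ B) :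
    energy L n ≤ B * L := by
  have hint : IntervalIntegrable (fun z => ‖n z‖ ^ 2) MeasureTheory.volume 0 L :=
    ((hn.norm).pow 2).intervalIntegrable_of_Icc hL
  calc energy L n ≤ ∫ _ in (0:ℝ)..L, B :=
        intervalIntegral.integral_mono_on hL hint intervalIntegrable_const hB
    _ = B * L := by simp [mul_comm]

theorem noiseBall_mono {γ L : ℝ} {x : ℂ} {E E' : ℝ} (h : E ≤ E') :
    noiseBall γ L x E ⊆ noiseBall γ L x E' := by
  rintro y ⟨n, q, hn, hsol, hq0, hqL, hE⟩
  exact ⟨n, q, hn, hsol, hq0, hqL, hE.trans h⟩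

theorem adist_le_of_mem_noiseBall {γ L E : ℝ} {x₁ x₂ y : ℂ} (hE : 0 ≤ E)
    (h₁ : y ∈ noiseBall γ L x₁ E) (h₂ : y ∈ noiseBall γ L x₂ E) : adist γ L x₁ x₂ ≤ E :=
  csInf_le ⟨0, fun _ hE' => hE'.1⟩ ⟨hE, y, h₁, h₂⟩

theorem mul_exp_mem_noiseBall_zero (γ : ℝ) {L : ℝ} (hL : 0 ≤ L) (x : ℂ) :
    x * exp (I * (γ * ‖x‖ ^ 2 * L : ℝ)) ∈ noiseBall γ L x 0 := by
  refine ⟨_, _, ?_, isSol_polar x (r := fun _ => 1) (r' := fun _ => 0)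
    (θ := fun z => γ * ‖x‖ ^ 2 * z) (fun z _ => hasDerivAt_const z 1) (fun z _ => ?_), ?_, ?_, ?_⟩
  · fun_prop
  · simpa using (hasDerivAt_id' z).const_mul (γ * ‖x‖ ^ 2)
  · simp
  · simp
  · simpa using energy_le_of_sq_norm_le hL (B := 0) (by fun_prop) (by simp)

section Bump

variable (a δ L : ℝ)

def bumpPower (z : ℝ) : ℝ := a ^ 2 + δ * (z * (L - z))

noncomputable def bumpPhase (z : ℝ) : ℝ := a ^ 2 * z + δ * (L * z ^ 2 / 2 - z ^ 3 / 3)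

theorem hasDerivAt_bumpPower (z : ℝ) : HasDerivAt (bumpPower a δ L) (δ * (L - 2 * z)) z := by
  have h := (((hasDerivAt_id' z).mul ((hasDerivAt_const z L).sub (hasDerivAt_id' z))).const_mul
    δ).const_add (a ^ 2)
  exact h.congr_deriv (by simp only [Pi.sub_apply]; ring)

theorem hasDerivAt_bumpPhase (z : ℝ) : HasDerivAt (bumpPhase a δ L) (bumpPower a δ L z) z := by
  have h := ((hasDerivAt_id' z).const_mul (a ^ 2)).add
    ((((hasDerivAt_pow 2 z).const_mul L).div_const 2).sub ((hasDerivAt_pow 3 z).div_const 3)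
      |>.const_mul δ)
  exact h.congr_deriv (by simp only [bumpPower]; push_cast; ring)

variable {a δ L}

theorem half_sq_le_bumpPower (hδ : |δ| * L ^ 2 ≤ 2 * a ^ 2) {z : ℝ} (hz : z ∈ Icc 0 L) :
    a ^ 2 / 2 ≤ bumpPower a δ L z := by
  have h0 : 0 ≤ z * (L - z) := mul_nonneg hz.1 (sub_nonneg.2 hz.2)
  have h1 : z * (L - z) ≤ L ^ 2 / 4 := by nlinarith [sq_nonneg (L - 2 * z)]
  have h2 := mul_le_mul_of_nonneg_right (neg_abs_le δ) h0
  have h3 := mul_le_mul_of_nonneg_left h1 (abs_nonneg δ)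
  unfold bumpPower
  linarith

theorem sq_deriv_sqrt_bumpPower_le (ha : a ≠ 0) (hδ : |δ| * L ^ 2 ≤ 2 * a ^ 2) {z : ℝ}
    (hz : z ∈ Icc 0 L) :
    (δ * (L - 2 * z) / (2 * √(bumpPower a δ L z))) ^ 2 ≤ δ ^ 2 * L ^ 2 / (2 * a ^ 2) := by
  have hP := half_sq_le_bumpPower hδ hz
  have hnum : (δ * (L - 2 * z)) ^ 2 ≤ δ ^ 2 * L ^ 2 := by
    nlinarith [mul_nonneg (sq_nonneg δ) (mul_nonneg hz.1 (sub_nonneg.2 hz.2))]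
  have hden : (2 * √(bumpPower a δ L z)) ^ 2 = 4 * bumpPower a δ L z := by
    rw [mul_pow, Real.sq_sqrt (by nlinarith [sq_nonneg a])]
    ring
  rw [div_pow, hden]
  exact div_le_div₀ (by positivity) hnum (by positivity) (by linarith)

end Bump

theorem bump_mem_noiseBall (γ : ℝ) {L δ : ℝ} (hL : 0 ≤ L) {x : ℂ} (hx : x ≠ 0)
    (hδ : |δ| * L ^ 2 ≤ 2 * ‖x‖ ^ 2) :
    x * exp (I * (γ * (‖x‖ ^ 2 * L + δ * L ^ 3 / 6) : ℝ)) ∈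
      noiseBall γ L x (δ ^ 2 * L ^ 2 / (2 * ‖x‖ ^ 2) * L) := by
  set a := ‖x‖ with ha
  have ha0 : a ≠ 0 := norm_ne_zero_iff.2 hx
  have hP : ∀ z ∈ Icc 0 L, 0 < bumpPower a δ L z := fun z hz =>
    (by positivity : 0 < a ^ 2 / 2).trans_le (half_sq_le_bumpPower hδ hz)
  have hc : ‖x / a‖ = 1 := by simp [ha, hx]
  have hr : ∀ z ∈ Icc 0 L, HasDerivAt (fun z => √(bumpPower a δ L z))
      (δ * (L - 2 * z) / (2 * √(bumpPower a δ L z))) z := fun z hz =>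
    (hasDerivAt_bumpPower a δ L z).sqrt (hP z hz).ne'
  have hθ : ∀ z ∈ Icc 0 L, HasDerivAt (fun z => γ * bumpPhase a δ L z)
      (γ * ‖x / a‖ ^ 2 * √(bumpPower a δ L z) ^ 2) z := fun z hz => by
    rw [hc, Real.sq_sqrt (hP z hz).le, one_pow, mul_one]
    exact (hasDerivAt_bumpPhase a δ L z).const_mul γ
  have hcont : ContinuousOn (fun z => δ * (L - 2 * z) / (2 * √(bumpPower a δ L z))) (Icc 0 L) :=
    ContinuousOn.div (by fun_prop) (by unfold bumpPower; fun_prop)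
      fun z hz => by have := Real.sqrt_pos.2 (hP z hz); positivity
  have hphase : Continuous fun z => exp (I * (γ * bumpPhase a δ L z : ℝ)) := by
    unfold bumpPhase; fun_prop
  have hn : ContinuousOn (fun z => x / a * (δ * (L - 2 * z) / (2 * √(bumpPower a δ L z)) : ℝ) *
      exp (I * (γ * bumpPhase a δ L z : ℝ))) (Icc 0 L) :=
    (continuousOn_const.mul (continuous_ofReal.comp_continuousOn hcont)).mul hphase.continuousOn
  refine ⟨_, _, hn, isSol_polar (x / a) hr hθ, ?_, ?_, ?_⟩
  · simp [bumpPower, bumpPhase, ha, Real.sqrt_sq (norm_nonneg x), hx]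
  · simp only [bumpPower, bumpPhase]
    rw [show a ^ 2 + δ * (L * (L - L)) = a ^ 2 by ring, Real.sqrt_sq (norm_nonneg x),
      div_mul_cancel₀ _ (ofReal_ne_zero.2 ha0)]
    congr 4
    ring
  · refine energy_le_of_sq_norm_le hL hn fun z hz => ?_
    rw [norm_mul_ofReal_mul_exp_I, hc, one_mul, sq_abs]
    exact sq_deriv_sqrt_bumpPower_le ha0 hδ hz

theorem adist_mul_exp_le (γ : ℝ) {L δ : ℝ} (hL : 0 ≤ L) {x : ℂ} (hx : x ≠ 0)
    (hδ : |δ| * L ^ 2 ≤ 2 * ‖x‖ ^ 2) :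
    adist γ L x (x * exp (I * (γ * δ * L ^ 3 / 6 : ℝ))) ≤ δ ^ 2 * L ^ 2 / (2 * ‖x‖ ^ 2) * L := by
  refine adist_le_of_mem_noiseBall (by positivity) (bump_mem_noiseBall γ hL hx hδ) ?_
  have hfree := noiseBall_mono (by positivity : (0:ℝ) ≤ δ ^ 2 * L ^ 2 / (2 * ‖x‖ ^ 2) * L)
    (mul_exp_mem_noiseBall_zero γ hL (x * exp (I * (γ * δ * L ^ 3 / 6 : ℝ))))
  convert hfree using 1
  rw [norm_mul, norm_exp_I_mul_ofReal, mul_one, mul_assoc, ← exp_add]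
  congr 2
  push_cast
  ring

theorem adist_phase_high_power_general (γ L : ℝ) (hγ : γ ≠ 0) (hL : 0 < L)
    (φ : ℝ) :
    ∀ ε : ℝ, 0 < ε → ∃ ρ : ℝ, ∀ x : ℂ, ρ < ‖x‖ →
      adist γ L x (x * Complex.exp (Complex.I * (φ:ℂ))) < ε := by
  intro ε hε
  set δ := 6 * φ / (γ * L ^ 3)
  have hδφ : γ * δ * L ^ 3 / 6 = φ := by
    have hL0 := hL.ne'
    simp only [δ]
    field_simp
  refine ⟨√(|δ| * L ^ 2 + δ ^ 2 * L ^ 3 / ε), fun x hx => ?_⟩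
  have hx2 := (Real.sqrt_lt' ((Real.sqrt_nonneg _).trans_lt hx)).1 hx
  have hx0 : x ≠ 0 := norm_pos_iff.1 ((Real.sqrt_nonneg _).trans_lt hx)
  have hδ : |δ| * L ^ 2 ≤ 2 * ‖x‖ ^ 2 := by
    linarith [(by positivity : 0 ≤ δ ^ 2 * L ^ 3 / ε), sq_nonneg ‖x‖]
  have hcost : δ ^ 2 * L ^ 3 < ε * ‖x‖ ^ 2 := by
    rw [← div_lt_iff₀' hε]
    linarith [(by positivity : 0 ≤ |δ| * L ^ 2)]
  calc adist γ L x (x * exp (I * φ)) = adist γ L x (x * exp (I * (γ * δ * L ^ 3 / 6 : ℝ))) := by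
        rw [hδφ]
    _ ≤ δ ^ 2 * L ^ 2 / (2 * ‖x‖ ^ 2) * L := adist_mul_exp_le γ hL.le hx0 hδ
    _ < ε := by
      rw [div_mul_eq_mul_div, div_lt_iff₀ (by positivity)]
      nlinarith

/-- At high input power, points differing only in phase become arbitrarily close
in adversarial distance: `d(x, x e^{iφ}) → 0` as `|x| → ∞`. -/
theorem adist_phase_high_power (γ L : ℝ) (hγ : γ ≠ 0) (hL : 0 < L)
    (φ : ℝ) (hφ : φ ∈ Set.Ico (-Real.pi) Real.pi) :
    ∀ ε : ℝ, 0 < ε → ∃ ρ : ℝ, ∀ x : ℂ, ρ < ‖x‖ →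
      adist γ L x (x * Complex.exp (Complex.I * (φ:ℂ))) < ε :=
  adist_phase_high_power_general γ L hγ hL φ
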